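/- In the fixed-size system where at each step, with probability p a uniformly random agent is replaced by an independent newcomer (mean 0, variance σ²) and with probability 1−p a uniform random-pair gossip averaging occurs, the vector X = (E x̄², E x²‾) evolves as X' = A X + b with A = [[1 − 2p/n, p/n²], [(1−p)/n, 1 − 1/n]] and b = (pσ²/n², pσ²/n). -/

import Mathlib

/-!
Each event changes `x̄` and `x²‾` by explicit amounts: gossip on `(i, j)` keeps `x̄` and lowers
`x²‾` by `(x_i - x_j)² / 2n`, while replacing `x_j` by `c` shifts `x̄` by `(c - x_j) / n` and `x²‾`
by `(c² - x_j²) / n`. Summed over the chosen indices these become quadratic polynomials in the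
coordinates, and `∑ k, (a + b x_k + d x_k²) = n (a + b x̄ + d x²‾)` closes the system. In
expectation the one remaining cross term `E[x̄ ξ]` vanishes by independence and `E ξ = 0`.
-/

open Finset MeasureTheory ProbabilityTheory
open scoped ENNReal

noncomputable def mean {n : ℕ} (v : Fin n → ℝ) : ℝ := (∑ k, v k) / n

noncomputable def meanSq {n : ℕ} (v : Fin n → ℝ) : ℝ := (∑ k, v k ^ 2) / n

noncomputable def gossip {n : ℕ} (v : Fin n → ℝ) (i j : Fin n) : Fin n → ℝ :=
  fun k => if k = i ∨ k = j then (v i + v j) / 2 else v k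

section Deterministic

variable {n : ℕ} (v : Fin n → ℝ)

lemma mean_update (j : Fin n) (c : ℝ) :
    mean (Function.update v j c) = mean v + (c - v j) / n := by
  rw [mean, mean, sum_update_of_mem (mem_univ j), ← add_sum_erase _ _ (mem_univ j)]
  simp only [sdiff_singleton_eq_erase]
  ring

lemma meanSq_update (j : Fin n) (c : ℝ) :
    meanSq (Function.update v j c) = meanSq v + (c ^ 2 - v j ^ 2) / n := by
  have := mean_update (fun k => v k ^ 2) j (c ^ 2)
  rwa [← Function.comp_def (· ^ 2) v, ← Function.comp_update] at this

lemma update_self_midpoint_apply (i j : Fin n) :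
    Function.update v i ((v i + v j) / 2) j = v j := by
  rcases eq_or_ne j i with rfl | h
  · simp
  · simp [h]

lemma gossip_eq_update_update (i j : Fin n) :
    gossip v i j = Function.update (Function.update v i ((v i + v j) / 2)) j ((v i + v j) / 2) := by
  ext k
  rcases eq_or_ne k j with rfl | hkj
  · simp [gossip]
  rcases eq_or_ne k i with rfl | hki
  · simp [gossip, hkj]
  · simp [gossip, hki, hkj]

lemma mean_gossip (i j : Fin n) : mean (gossip v i j) = mean v := by
  rw [gossip_eq_update_update, mean_update, mean_update, update_self_midpoint_apply]
  ring

lemma meanSq_gossip (i j : Fin n) :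
    meanSq (gossip v i j) = meanSq v - (v i - v j) ^ 2 / (2 * n) := by
  rw [gossip_eq_update_update, meanSq_update, meanSq_update, update_self_midpoint_apply]
  ring

variable [NeZero n]

lemma sum_quadratic_eq (a b d : ℝ) :
    ∑ k, (a + b * v k + d * v k ^ 2) = n * (a + b * mean v + d * meanSq v) := by
  have hn : (n : ℝ) ≠ 0 := NeZero.ne _
  simp only [sum_add_distrib, ← mul_sum, sum_const, card_univ, Fintype.card_fin, nsmul_eq_mul,
    mean, meanSq]
  field_simp

lemma sum_mean_update_sq (c : ℝ) :
    ∑ j, mean (Function.update v j c) ^ 2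
      = (n - 2) * mean v ^ 2 + meanSq v / n + c ^ 2 / n + 2 * (n - 1) / n * (mean v * c) := by
  have hn : (n : ℝ) ≠ 0 := NeZero.ne _
  have h j : mean (Function.update v j c) ^ 2
      = (mean v + c / n) ^ 2 + (-2 * (mean v + c / n) / n) * v j + 1 / n ^ 2 * v j ^ 2 := by
    rw [mean_update]; ring
  simp only [h, sum_quadratic_eq]
  field_simp
  ring

lemma sum_meanSq_update (c : ℝ) :
    ∑ j, meanSq (Function.update v j c) = (n - 1) * meanSq v + c ^ 2 := by
  have hn : (n : ℝ) ≠ 0 := NeZero.ne _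
  have h j : meanSq (Function.update v j c)
      = (meanSq v + c ^ 2 / n) + 0 * v j + (-1 / n) * v j ^ 2 := by
    rw [meanSq_update]; ring
  simp only [h, sum_quadratic_eq]
  field_simp
  ring

lemma sum_sum_meanSq_gossip :
    ∑ i, ∑ j, meanSq (gossip v i j) = n * (n - 1) * meanSq v + n * mean v ^ 2 := by
  have hn : (n : ℝ) ≠ 0 := NeZero.ne _
  have h i j : meanSq (gossip v i j)
      = (meanSq v - v i ^ 2 / (2 * n)) + v i / n * v j + (-1 / (2 * n)) * v j ^ 2 := by
    rw [meanSq_gossip]; ring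
  have h' i : n * (meanSq v - v i ^ 2 / (2 * n) + v i / n * mean v + -1 / (2 * n) * meanSq v)
      = (n * meanSq v - meanSq v / 2) + mean v * v i + (-1 / 2) * v i ^ 2 := by
    field_simp; ring
  simp only [h, sum_quadratic_eq, h']
  field_simp
  ring

end Deterministic

section Moments

variable {Ω : Type*} [MeasurableSpace Ω] {μ : Measure Ω} {n : ℕ}

lemma measurable_mean : Measurable (mean : (Fin n → ℝ) → ℝ) := by
  unfold mean; fun_prop

lemma memLp_mean {p : ℝ≥0∞} {y : Ω → Fin n → ℝ} (hy : ∀ k, MemLp (fun ω => y ω k) p μ) :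
    MemLp (fun ω => mean (y ω)) p μ :=
  (memLp_finsetSum univ fun k _ => hy k).mul_const (n : ℝ)⁻¹

lemma integrable_meanSq {y : Ω → Fin n → ℝ} (hy : ∀ k, MemLp (fun ω => y ω k) 2 μ) :
    Integrable (fun ω => meanSq (y ω)) μ :=
  (integrable_finsetSum _ fun k _ => (hy k).integrable_sq).div_const _

lemma memLp_update_apply {p : ℝ≥0∞} {x : Ω → Fin n → ℝ} {ξ : Ω → ℝ}
    (hx : ∀ k, MemLp (fun ω => x ω k) p μ) (hξ : MemLp ξ p μ) (j k : Fin n) :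
    MemLp (fun ω => Function.update (x ω) j (ξ ω) k) p μ := by
  rcases eq_or_ne k j with rfl | h
  · simpa using hξ
  · simpa [h] using hx k

lemma memLp_gossip_apply {p : ℝ≥0∞} {x : Ω → Fin n → ℝ}
    (hx : ∀ k, MemLp (fun ω => x ω k) p μ) (i j k : Fin n) :
    MemLp (fun ω => gossip (x ω) i j k) p μ := by
  have hmid : MemLp (fun ω => (x ω i + x ω j) / 2) p μ := ((hx i).add (hx j)).mul_const 2⁻¹
  simp only [gossip_eq_update_update]
  exact memLp_update_apply (memLp_update_apply hx hmid i) hmid j k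

lemma memLp_two_apply_of_integrable_meanSq {x : Ω → Fin n → ℝ} (hx : Measurable x)
    (hq : Integrable (fun ω => meanSq (x ω)) μ) (k : Fin n) :
    MemLp (fun ω => x ω k) 2 μ := by
  have hxk : Measurable fun ω => x ω k := (measurable_pi_apply k).comp hx
  refine (memLp_two_iff_integrable_sq hxk.aestronglyMeasurable).2 <|
    (hq.const_mul n).mono' (hxk.pow_const 2).aestronglyMeasurable (ae_of_all _ fun ω => ?_)
  have hn : (n : ℝ) ≠ 0 := Nat.cast_ne_zero.2 (Fin.pos k).ne'
  rw [Real.norm_of_nonneg (sq_nonneg _), meanSq, mul_div_cancel₀ _ hn]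
  exact single_le_sum (f := fun k => x ω k ^ 2) (fun _ _ => sq_nonneg _) (mem_univ k)

lemma sum_sum_integral_mean_gossip_sq (x : Ω → Fin n → ℝ) :
    ∑ i, ∑ j, ∫ ω, mean (gossip (x ω) i j) ^ 2 ∂μ = n ^ 2 * ∫ ω, mean (x ω) ^ 2 ∂μ := by
  simp only [mean_gossip, sum_const, card_univ, Fintype.card_fin, nsmul_eq_mul]
  ring

variable [NeZero n] {x : Ω → Fin n → ℝ}

lemma sum_integral_mean_update_sq {ξ : Ω → ℝ} (hx : ∀ k, MemLp (fun ω => x ω k) 2 μ)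
    (hξ : MemLp ξ 2 μ) :
    ∑ j, ∫ ω, mean (Function.update (x ω) j (ξ ω)) ^ 2 ∂μ
      = (n - 2) * ∫ ω, mean (x ω) ^ 2 ∂μ + (∫ ω, meanSq (x ω) ∂μ) / n
        + (∫ ω, ξ ω ^ 2 ∂μ) / n + 2 * (n - 1) / n * ∫ ω, mean (x ω) * ξ ω ∂μ := by
  have hm := memLp_mean hx
  have hm2 := hm.integrable_sq
  have hq := integrable_meanSq hx
  have hξ2 := hξ.integrable_sq
  have hmξ : Integrable (fun ω => mean (x ω) * ξ ω) μ := hm.integrable_mul hξ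
  rw [← integral_finsetSum _ fun j _ => (memLp_mean (memLp_update_apply hx hξ j)).integrable_sq]
  simp only [sum_mean_update_sq]
  rw [integral_add (by fun_prop) (by fun_prop), integral_add (by fun_prop) (by fun_prop),
    integral_add (by fun_prop) (by fun_prop), integral_const_mul, integral_div, integral_div,
    integral_const_mul]

lemma sum_integral_meanSq_update {ξ : Ω → ℝ} (hx : ∀ k, MemLp (fun ω => x ω k) 2 μ)
    (hξ : MemLp ξ 2 μ) :
    ∑ j, ∫ ω, meanSq (Function.update (x ω) j (ξ ω)) ∂μ
      = (n - 1) * ∫ ω, meanSq (x ω) ∂μ + ∫ ω, ξ ω ^ 2 ∂μ := by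
  rw [← integral_finsetSum _ fun j _ => integrable_meanSq (memLp_update_apply hx hξ j)]
  simp only [sum_meanSq_update]
  rw [integral_add ((integrable_meanSq hx).const_mul _) hξ.integrable_sq, integral_const_mul]

lemma sum_sum_integral_meanSq_gossip (hx : ∀ k, MemLp (fun ω => x ω k) 2 μ) :
    ∑ i, ∑ j, ∫ ω, meanSq (gossip (x ω) i j) ∂μ
      = n * (n - 1) * ∫ ω, meanSq (x ω) ∂μ + n * ∫ ω, mean (x ω) ^ 2 ∂μ := by
  have hgossip i j : Integrable (fun ω => meanSq (gossip (x ω) i j)) μ :=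
    integrable_meanSq (memLp_gossip_apply hx i j)
  calc ∑ i, ∑ j, ∫ ω, meanSq (gossip (x ω) i j) ∂μ
      = ∑ i, ∫ ω, ∑ j, meanSq (gossip (x ω) i j) ∂μ :=
        sum_congr rfl fun i _ => (integral_finsetSum _ fun j _ => hgossip i j).symm
    _ = ∫ ω, ∑ i, ∑ j, meanSq (gossip (x ω) i j) ∂μ :=
        (integral_finsetSum _ fun i _ => integrable_finsetSum _ fun j _ => hgossip i j).symm
    _ = _ := by
      simp only [sum_sum_meanSq_gossip]
      rw [integral_add ((integrable_meanSq hx).const_mul _)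
        ((memLp_mean hx).integrable_sq.const_mul _), integral_const_mul, integral_const_mul]

end Moments

theorem fixed_size_step_general {Ω : Type*} [MeasureSpace Ω]
    (n : ℕ) (hn : 2 ≤ n) (p σ2 : ℝ)
    (x : Ω → Fin n → ℝ) (ξ : Ω → ℝ)
    (hxm : Measurable x) (hξm : Measurable ξ)
    (hindep : IndepFun x ξ)
    (hmean : ∫ ω, ξ ω = 0) (hsecond : ∫ ω, (ξ ω) ^ 2 = σ2)
    (hint2 : Integrable (fun ω => meanSq (x ω)))
    (hint4 : Integrable (fun ω => (ξ ω) ^ 2)) :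
    p * ((∑ j, ∫ ω, (mean (Function.update (x ω) j (ξ ω))) ^ 2) / (n : ℝ))
        + (1 - p) * ((∑ i, ∑ j, ∫ ω, (mean (gossip (x ω) i j)) ^ 2) / (n : ℝ) ^ 2)
      = (1 - 2 * p / n) * (∫ ω, (mean (x ω)) ^ 2)
          + (p / (n : ℝ) ^ 2) * (∫ ω, meanSq (x ω)) + p * σ2 / (n : ℝ) ^ 2
    ∧ p * ((∑ j, ∫ ω, meanSq (Function.update (x ω) j (ξ ω))) / (n : ℝ))
        + (1 - p) * ((∑ i, ∑ j, ∫ ω, meanSq (gossip (x ω) i j)) / (n : ℝ) ^ 2)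
      = ((1 - p) / n) * (∫ ω, (mean (x ω)) ^ 2)
          + (1 - 1 / (n : ℝ)) * (∫ ω, meanSq (x ω)) + p * σ2 / (n : ℝ) := by
  have : NeZero n := ⟨by omega⟩
  have hn0 : (n : ℝ) ≠ 0 := NeZero.ne _
  have hx := memLp_two_apply_of_integrable_meanSq hxm hint2
  have hξ : MemLp ξ 2 := (memLp_two_iff_integrable_sq hξm.aestronglyMeasurable).2 hint4
  have hcross : ∫ ω, mean (x ω) * ξ ω = 0 := by
    have hind : IndepFun (fun ω => mean (x ω)) ξ := hindep.comp measurable_mean measurable_id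
    rw [hind.integral_fun_mul_eq_mul_integral (memLp_mean hx).aestronglyMeasurable
      hξ.aestronglyMeasurable, hmean, mul_zero]
  rw [sum_integral_mean_update_sq hx hξ, sum_sum_integral_mean_gossip_sq,
    sum_integral_meanSq_update hx hξ, sum_sum_integral_meanSq_gossip hx, hcross, hsecond]
  constructor <;> field_simp <;> ring

/-- One step of the fixed-size system: with probability `p` a uniformly random agent is
replaced by an independent newcomer `ξ` (mean `0`, second moment `σ²`), and with
probability `1 - p` a uniform random-pair gossip occurs.  The vector
`X = (E x̄², E x²‾)` evolves as `X' = A X + b` with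
`A = [[1 - 2p/n, p/n²], [(1-p)/n, 1 - 1/n]]` and `b = (pσ²/n², pσ²/n)`. -/
theorem fixed_size_step {Ω : Type*} [MeasureSpace Ω]
    [IsProbabilityMeasure (volume : Measure Ω)]
    (n : ℕ) (hn : 2 ≤ n) (p σ2 : ℝ) (hp0 : 0 ≤ p) (hp1 : p ≤ 1)
    (x : Ω → Fin n → ℝ) (ξ : Ω → ℝ)
    (hxm : Measurable x) (hξm : Measurable ξ)
    (hindep : IndepFun x ξ)
    (hmean : ∫ ω, ξ ω = 0) (hsecond : ∫ ω, (ξ ω) ^ 2 = σ2)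
    (hint1 : Integrable (fun ω => (mean (x ω)) ^ 2))
    (hint2 : Integrable (fun ω => meanSq (x ω)))
    (hint3 : Integrable ξ)
    (hint4 : Integrable (fun ω => (ξ ω) ^ 2)) :
    p * ((∑ j, ∫ ω, (mean (Function.update (x ω) j (ξ ω))) ^ 2) / (n : ℝ))
        + (1 - p) * ((∑ i, ∑ j, ∫ ω, (mean (gossip (x ω) i j)) ^ 2) / (n : ℝ) ^ 2)
      = (1 - 2 * p / n) * (∫ ω, (mean (x ω)) ^ 2)
          + (p / (n : ℝ) ^ 2) * (∫ ω, meanSq (x ω)) + p * σ2 / (n : ℝ) ^ 2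
    ∧ p * ((∑ j, ∫ ω, meanSq (Function.update (x ω) j (ξ ω))) / (n : ℝ))
        + (1 - p) * ((∑ i, ∑ j, ∫ ω, meanSq (gossip (x ω) i j)) / (n : ℝ) ^ 2)
      = ((1 - p) / n) * (∫ ω, (mean (x ω)) ^ 2)
          + (1 - 1 / (n : ℝ)) * (∫ ω, meanSq (x ω)) + p * σ2 / (n : ℝ) :=
  fixed_size_step_general n hn p σ2 x ξ hxm hξm hindep hmean hsecond hint2 hint4
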